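/- For every κ ∈ (0, e^{−2}), the function s_{1/2,κ} attains its maximum over [0,1] at two distinct points; more precisely, there exists h* ∈ [0,1] with h* ≠ 1/2 such that both h* and 1−h* are maximizers of s_{1/2,κ} on [0,1] (the function has two modes). -/

import Mathlib

/-!
The map `h ↦ 1 - h` swaps the two terms of `s (1/2) κ`, so a maximizer `h` on `[0, 1]` (which
exists by compactness) comes with the maximizer `1 - h`; it remains to see that `h = 1/2` is not
a maximizer. With `L = log κ`, `s (1/2) κ (1/2 + t) = exp ((1/4 + t²) L) · cosh (t L)`, so this
amounts to `cosh x > exp (x² / c)` for some `x = c t` with `0 < t ≤ 1/2`, where `c = -L > 2`.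
That follows from `cosh x ≥ 1 + x²/2` and `exp y < 1/(1 - y)` as soon as `x² < c - 2`.
-/

noncomputable def s (m κ h : ℝ) : ℝ := m * κ ^ ((1 - h) ^ 2) + (1 - m) * κ ^ (h ^ 2)

open Real Set

lemma one_add_sq_div_two_le_cosh (x : ℝ) : 1 + x ^ 2 / 2 ≤ cosh x := by
  have of_nonneg : ∀ y, 0 ≤ y → 1 + y ^ 2 / 2 ≤ cosh y := fun y hy => by
    have hsinh : y / 2 ≤ sinh (y / 2) := self_le_sinh_iff.2 (by positivity)
    have hcosh : cosh y = 1 + 2 * sinh (y / 2) ^ 2 := by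
      rw [← mul_div_cancel₀ y two_ne_zero, cosh_two_mul, cosh_sq]; ring_nf
    nlinarith
  rcases le_total 0 x with hx | hx
  · exact of_nonneg x hx
  · simpa using of_nonneg (-x) (neg_nonneg.2 hx)

lemma exp_sq_div_lt_cosh {c x : ℝ} (hx : 0 < x) (hxc : x ^ 2 < c - 2) :
    exp (x ^ 2 / c) < cosh x := by
  have hc : 0 < c := by nlinarith
  have hy : x ^ 2 / c < 1 := (div_lt_one hc).2 (by linarith)
  calc exp (x ^ 2 / c) < 1 / (1 - x ^ 2 / c) :=
        exp_bound_div_one_sub_of_interval' (by positivity) hy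
    _ ≤ 1 + x ^ 2 / 2 := by
        rw [div_le_iff₀ (sub_pos.2 hy)]
        have : 0 ≤ x ^ 2 * (c - 2 - x ^ 2) / (2 * c) := by
          apply div_nonneg _ (by positivity); nlinarith
        field_simp at this ⊢
        nlinarith
    _ ≤ cosh x := one_add_sq_div_two_le_cosh x

lemma exists_one_lt_exp_mul_cosh {L : ℝ} (hL : L < -2) :
    ∃ t ∈ Ioc (0 : ℝ) (1 / 2), 1 < exp (t ^ 2 * L) * cosh (t * L) := by
  obtain ⟨c, rfl⟩ : ∃ c, L = -c := ⟨-L, by ring⟩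
  have hc : 2 < c := by linarith
  -- `t = (c - 2) / c²` makes `x = c t = (c - 2) / c` satisfy `x² < c - 2`.
  refine ⟨(c - 2) / c ^ 2, ⟨by positivity, ?_⟩, ?_⟩
  · rw [div_le_iff₀ (by positivity)]; nlinarith
  have hxc : ((c - 2) / c) ^ 2 < c - 2 := by
    rw [div_pow, div_lt_iff₀ (by positivity)]; nlinarith
  have hexp : ((c - 2) / c ^ 2) ^ 2 * -c = -(((c - 2) / c) ^ 2 / c) := by field_simp
  have hcosh : (c - 2) / c ^ 2 * -c = -((c - 2) / c) := by field_simp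
  rw [hexp, hcosh, cosh_neg, exp_neg, ← div_eq_inv_mul, one_lt_div (exp_pos _)]
  exact exp_sq_div_lt_cosh (by positivity) hxc

lemma s_one_sub (m κ h : ℝ) : s m κ (1 - h) = s (1 - m) κ h := by
  simp only [s, sub_sub_cancel]; ring

lemma continuous_s (m : ℝ) {κ : ℝ} (hκ : 0 < κ) : Continuous (s m κ) := by
  unfold s
  fun_prop (disch := exact hκ.ne')

lemma s_half_half_add {κ : ℝ} (hκ : 0 < κ) (t : ℝ) :
    s (1 / 2) κ (1 / 2 + t) = exp ((1 / 4 + t ^ 2) * log κ) * cosh (t * log κ) := by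
  rw [cosh_eq, mul_div_assoc', mul_add, ← exp_add, ← exp_add]
  simp only [s, rpow_def_of_pos hκ]
  ring_nf

lemma exists_s_half_half_lt {κ : ℝ} (hκ : 0 < κ) (hκ2 : κ < exp (-2)) :
    ∃ w ∈ Icc (0 : ℝ) 1, s (1 / 2) κ (1 / 2) < s (1 / 2) κ w := by
  obtain ⟨t, ⟨ht0, ht⟩, hlt⟩ :=
    exists_one_lt_exp_mul_cosh ((log_lt_iff_lt_exp hκ).2 hκ2)
  refine ⟨1 / 2 + t, ⟨by linarith, by linarith⟩, ?_⟩
  have hhalf : s (1 / 2) κ (1 / 2) = exp (1 / 4 * log κ) := by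
    simpa using s_half_half_add hκ 0
  rw [hhalf, s_half_half_add hκ t, add_mul, exp_add, mul_assoc]
  exact lt_mul_of_one_lt_right (exp_pos _) hlt

lemma exists_isMaxOn_and_isMaxOn_one_sub {f : ℝ → ℝ} (hf : ContinuousOn f (Icc 0 1))
    (hsymm : ∀ x, f (1 - x) = f x) {w : ℝ} (hw : w ∈ Icc (0 : ℝ) 1) (hlt : f (1 / 2) < f w) :
    ∃ h ∈ Icc (0 : ℝ) 1, h ≠ 1 / 2 ∧ IsMaxOn f (Icc 0 1) h ∧ IsMaxOn f (Icc 0 1) (1 - h) := by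
  obtain ⟨h, hmem, hmax⟩ := isCompact_Icc.exists_isMaxOn (nonempty_Icc.2 zero_le_one) hf
  refine ⟨h, hmem, ?_, hmax, fun x hx => (hsymm h).symm ▸ hmax hx⟩
  rintro rfl
  exact (hmax hw).not_gt hlt

theorem two_modes (κ : ℝ) (hκ : κ ∈ Set.Ioo 0 (Real.exp (-2))) :
    ∃ h : ℝ, h ∈ Set.Icc (0 : ℝ) 1 ∧ h ≠ 1 / 2 ∧
      IsMaxOn (s (1 / 2) κ) (Set.Icc 0 1) h ∧
      IsMaxOn (s (1 / 2) κ) (Set.Icc 0 1) (1 - h) := by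
  obtain ⟨hκ0, hκ2⟩ := hκ
  obtain ⟨w, hw, hlt⟩ := exists_s_half_half_lt hκ0 hκ2
  refine exists_isMaxOn_and_isMaxOn_one_sub (continuous_s _ hκ0).continuousOn
    (fun h => ?_) hw hlt
  rw [s_one_sub]
  norm_num
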